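/- Let n ≥ 1, g ≥ 2, N = (n²-1)(g-1), and define F(y) = y^N ((1-y^n)/(1-y))^{g-1} Σ_{m|n} (μ(m)/m) (m ∏_{j=1}^{n/m - 1} (1 - y^{jm})²)^{g-1}, a priori a rational function of y. Then F(y) is a polynomial in y with integer coefficients, and its value at y = 1 is lim_{y→1} F(y) = n^{g-1} · μ(n) · n^{g-2} = μ(n) n^{2g-3}. -/

import Mathlib

open Finset Polynomial

/-- The conjectured compactly supported `y`-genus
`F(y) = y^N ((1-y^n)/(1-y))^{g-1} Σ_{m|n} (μ(m)/m)(m ∏_{j=1}^{n/m-1}(1-y^{jm})²)^{g-1}`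
(with `N = (n²-1)(g-1)`), a priori a rational function of `y`, is a polynomial with
integer coefficients whose value at `y = 1` equals `μ(n) n^{2g-3}`. -/
theorem ygenus_is_polynomial_and_euler_char (n g : ℕ) (hn : 1 ≤ n) (hg : 2 ≤ g) :
    ∃ P : Polynomial ℤ,
      (RatFunc.X ^ ((n ^ 2 - 1) * (g - 1)) *
          ((1 - RatFunc.X ^ n) / (1 - RatFunc.X)) ^ (g - 1) *
          ∑ m ∈ n.divisors,
            RatFunc.C ((ArithmeticFunction.moebius m : ℚ) / m) *
              ((m : RatFunc ℚ) *
                ∏ j ∈ Finset.Ico 1 (n / m), (1 - RatFunc.X ^ (j * m)) ^ 2) ^ (g - 1)) =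
        algebraMap (Polynomial ℚ) (RatFunc ℚ) (P.map (algebraMap ℤ ℚ)) ∧
      P.eval 1 = ArithmeticFunction.moebius n * (n : ℤ) ^ (2 * g - 3) := by
  refine ⟨X ^ ((n ^ 2 - 1) * (g - 1)) * (∑ i ∈ range n, X ^ i) ^ (g - 1) *
      ∑ m ∈ n.divisors,
        C ((ArithmeticFunction.moebius m : ℤ) * (m : ℤ) ^ (g - 2)) *
          (∏ j ∈ Finset.Ico 1 (n / m), (1 - X ^ (j * m)) ^ 2) ^ (g - 1), ?_, ?_⟩
  · -- polynomial identity in RatFunc ℚ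
    have hX1 : (1 - RatFunc.X : RatFunc ℚ) ≠ 0 := by
      rw [show (1 - RatFunc.X : RatFunc ℚ) =
          algebraMap ℚ[X] (RatFunc ℚ) (1 - X) by simp [RatFunc.algebraMap_X]]
      rw [Ne, map_eq_zero_iff _ (RatFunc.algebraMap_injective ℚ)]
      intro h
      have := congrArg (Polynomial.eval 0) h
      simp at this
    have hgeom : ((1 - RatFunc.X ^ n) / (1 - RatFunc.X) : RatFunc ℚ) =
        algebraMap ℚ[X] (RatFunc ℚ) (∑ i ∈ range n, X ^ i) := by
      rw [div_eq_iff hX1]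
      have h := geom_sum_mul (X : ℚ[X]) n
      have h2 : (∑ i ∈ range n, (X : ℚ[X]) ^ i) * (1 - X) = 1 - X ^ n := by
        linear_combination -h
      calc (1 - RatFunc.X ^ n : RatFunc ℚ)
          = algebraMap ℚ[X] (RatFunc ℚ) (1 - X ^ n) := by
            simp [RatFunc.algebraMap_X]
        _ = algebraMap ℚ[X] (RatFunc ℚ) ((∑ i ∈ range n, X ^ i) * (1 - X)) := by rw [h2]
        _ = algebraMap ℚ[X] (RatFunc ℚ) (∑ i ∈ range n, X ^ i) * (1 - RatFunc.X) := by
            simp [RatFunc.algebraMap_X]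
    rw [hgeom]
    simp only [Polynomial.map_mul, Polynomial.map_pow, Polynomial.map_sum, Polynomial.map_X,
      map_mul, map_pow, map_sum, RatFunc.algebraMap_X]
    congr 1
    refine Finset.sum_congr rfl fun m hm => ?_
    have hm0 : (m : ℚ) ≠ 0 := by
      exact_mod_cast (Nat.pos_of_mem_divisors hm).ne'
    simp only [Polynomial.map_C, Polynomial.map_prod, Polynomial.map_sub, Polynomial.map_one,
      Polynomial.map_pow, Polynomial.map_X, map_sub, map_one, map_pow, map_prod,
      Polynomial.map_intCast, Polynomial.map_natCast, eq_intCast, map_intCast, map_natCast, map_div₀,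
      RatFunc.algebraMap_X, RatFunc.algebraMap_C]
    have hmR : ((m : RatFunc ℚ)) ≠ 0 := by
      rw [← map_natCast (algebraMap ℚ[X] (RatFunc ℚ)) m, Ne,
        map_eq_zero_iff _ (RatFunc.algebraMap_injective ℚ)]
      exact_mod_cast (Nat.pos_of_mem_divisors hm).ne'
    have hgg : g - 1 = (g - 2) + 1 := by omega
    rw [mul_pow, hgg, pow_succ]
    field_simp
  · -- evaluation at 1
    have hsum : (∑ m ∈ n.divisors,
        (C ((ArithmeticFunction.moebius m : ℤ) * (m : ℤ) ^ (g - 2)) *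
          (∏ j ∈ Finset.Ico 1 (n / m), (1 - X ^ (j * m)) ^ 2) ^ (g - 1)).eval 1) =
        (ArithmeticFunction.moebius n : ℤ) * (n : ℤ) ^ (g - 2) := by
      rw [Finset.sum_eq_single n]
      · simp [Nat.div_self (by omega : 0 < n)]
      · intro m hm hmn
        have hmd := (Nat.mem_divisors.mp hm).1
        have hmp := Nat.pos_of_mem_divisors hm
        have h2 : 2 ≤ n / m := by
          rcases hmd with ⟨k, rfl⟩
          rw [Nat.mul_div_cancel_left _ hmp]
          rcases Nat.lt_or_ge k 2 with h | h
          · interval_cases k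
            · simp at hn
            · simp at hmn
          · exact h
        have h1 : (1 : ℕ) ∈ Finset.Ico 1 (n / m) := by
          simp; omega
        simp only [eval_mul, eval_pow, eval_prod, eval_sub, eval_one, eval_C]
        rw [Finset.prod_eq_zero h1 (by simp)]
        rw [zero_pow (by omega : g - 1 ≠ 0), mul_zero]
      · intro h
        exact absurd (Nat.mem_divisors.mpr ⟨dvd_refl n, by omega⟩) h
    simp only [eval_mul, eval_pow, eval_finset_sum, eval_X, one_pow] at *
    rw [hsum]
    simp only [Finset.sum_const, card_range, nsmul_eq_mul, mul_one, one_mul]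
    have h23 : 2 * g - 3 = (g - 1) + (g - 2) := by omega
    rw [h23, pow_add]; ring
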